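/- arXiv:2507.03497 — 3 statements merged into one kernel-verified Lean document; each statement's English description precedes it below -/
import Mathlib

section
/- Let $a < b$ be real numbers and let $f : [a,b] \to \mathbb{R}$ be nonnegative, continuous, and decreasing, with $f(b) > 0$. Define $I(t) = t + f(t)$ and $I^k = I \circ I^{k-1}$ with $I^0 = \mathrm{id}$. Then $\inf\{k \in \mathbb{N} : I^k(a) \geq b\} \leq 1 + \int_a^b f(t)^{-1}\, dt$. -/
theorem stmt_6 (a b : ℝ) (hab : a < b) (f : ℝ → ℝ)
    (hnn : ∀ t ∈ Set.Icc a b, 0 ≤ f t)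
    (hcont : ContinuousOn f (Set.Icc a b))
    (hdec : AntitoneOn f (Set.Icc a b))
    (hfb : 0 < f b) :
    ((sInf {k : ℕ | b ≤ (fun t => t + f t)^[k] a} : ℕ) : ℝ)
      ≤ 1 + ∫ t in a..b, (f t)⁻¹ := by
  set x : ℕ → ℝ := fun k => (fun t => t + f t)^[k] a with hx
  have hxsucc : ∀ k, x (k + 1) = x k + f (x k) := by
    intro k
    simp only [hx, Function.iterate_succ_apply']
  have hx0 : x 0 = a := rfl
  have hb_mem : b ∈ Set.Icc a b := Set.right_mem_Icc.2 hab.le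
  have hfpos : ∀ t ∈ Set.Icc a b, 0 < f t := fun t ht =>
    lt_of_lt_of_le hfb (hdec ht hb_mem ht.2)
  have hcont_inv : ContinuousOn (fun t => (f t)⁻¹) (Set.Icc a b) :=
    hcont.inv₀ fun t ht => (hfpos t ht).ne'
  have hinteg : ∀ c d : ℝ, a ≤ c → c ≤ d → d ≤ b →
      IntervalIntegrable (fun t => (f t)⁻¹) MeasureTheory.volume c d := by
    intro c d hac hcd hdb
    exact (hcont_inv.mono (Set.Icc_subset_Icc hac hdb)).intervalIntegrable_of_Icc hcd
  have hnonneg : ∀ c d : ℝ, a ≤ c → c ≤ d → d ≤ b →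
      0 ≤ ∫ t in c..d, (f t)⁻¹ := by
    intro c d hac hcd hdb
    refine intervalIntegral.integral_nonneg hcd fun t ht => inv_nonneg.2 ?_
    exact hnn t ⟨le_trans hac ht.1, le_trans ht.2 hdb⟩
  set N := sInf {k : ℕ | b ≤ x k} with hN
  rcases Nat.eq_zero_or_pos N with h0 | hNpos
  · rw [h0]
    have := hnonneg a b le_rfl hab.le le_rfl
    push_cast
    linarith
  · have hlt : ∀ k < N, x k < b := by
      intro k hk
      have := Nat.notMem_of_lt_sInf hk
      simpa using not_le.1 this
    have hge : ∀ k ≤ N, a ≤ x k := by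
      intro k hk
      induction k with
      | zero => simp [hx0]
      | succ n ih =>
        have hn : n < N := Nat.lt_of_succ_le hk
        have han : a ≤ x n := ih hn.le
        have hmem : x n ∈ Set.Icc a b := ⟨han, (hlt n hn).le⟩
        have := hnn _ hmem
        rw [hxsucc]
        linarith
    have hint : ∀ k ≤ N, k < N → (k : ℝ) ≤ ∫ t in a..x k, (f t)⁻¹ := by
      intro k _ hk
      induction k with
      | zero => simp [hx0]
      | succ n ih =>
        have hn : n < N := Nat.lt_of_succ_lt hk
        have ihn := ih hn.le hn
        have han : a ≤ x n := hge n hn.le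
        have hnb : x n < b := hlt n hn
        have hmemn : x n ∈ Set.Icc a b := ⟨han, hnb.le⟩
        have hfn : 0 < f (x n) := hfpos _ hmemn
        have hstep : x n ≤ x (n + 1) := by
          rw [hxsucc]; linarith [hnn _ hmemn]
        have hsb : x (n + 1) < b := hlt _ hk
        have hI1 : IntervalIntegrable (fun t => (f t)⁻¹) MeasureTheory.volume a (x n) :=
          hinteg a (x n) le_rfl han hnb.le
        have hI2 : IntervalIntegrable (fun t => (f t)⁻¹) MeasureTheory.volume (x n) (x (n + 1)) :=
          hinteg (x n) (x (n + 1)) han hstep hsb.le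
        have hsplit : (∫ t in a..x n, (f t)⁻¹) + ∫ t in x n..x (n + 1), (f t)⁻¹
            = ∫ t in a..x (n + 1), (f t)⁻¹ :=
          intervalIntegral.integral_add_adjacent_intervals hI1 hI2
        have hone : (1 : ℝ) ≤ ∫ t in x n..x (n + 1), (f t)⁻¹ := by
          have hmono : ∫ t in x n..x (n + 1), (f (x n))⁻¹
              ≤ ∫ t in x n..x (n + 1), (f t)⁻¹ := by
            refine intervalIntegral.integral_mono_on hstep intervalIntegrable_const hI2 ?_
            intro t ht
            have htm : t ∈ Set.Icc a b := ⟨le_trans han ht.1, le_trans ht.2 hsb.le⟩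
            have hle : f t ≤ f (x n) := hdec hmemn htm ht.1
            exact inv_anti₀ (hfpos t htm) hle
          have hconst : ∫ _ in x n..x (n + 1), (f (x n))⁻¹
              = (x (n + 1) - x n) * (f (x n))⁻¹ := by
            rw [intervalIntegral.integral_const, smul_eq_mul]
          have hdiff : x (n + 1) - x n = f (x n) := by rw [hxsucc]; ring
          rw [hconst, hdiff, mul_inv_cancel₀ hfn.ne'] at hmono
          exact hmono
        push_cast
        linarith
    have hN1 : N - 1 < N := Nat.sub_lt hNpos one_pos
    have h1 : ((N - 1 : ℕ) : ℝ) ≤ ∫ t in a..x (N - 1), (f t)⁻¹ := hint (N - 1) hN1.le hN1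
    have h2 : (∫ t in a..x (N - 1), (f t)⁻¹) ≤ ∫ t in a..b, (f t)⁻¹ := by
      have han : a ≤ x (N - 1) := hge _ hN1.le
      have hnb : x (N - 1) ≤ b := (hlt _ hN1).le
      have hsplit : (∫ t in a..x (N - 1), (f t)⁻¹) + ∫ t in x (N - 1)..b, (f t)⁻¹
          = ∫ t in a..b, (f t)⁻¹ :=
        intervalIntegral.integral_add_adjacent_intervals
          (hinteg a _ le_rfl han hnb) (hinteg _ b han hnb le_rfl)
      have := hnonneg (x (N - 1)) b han hnb le_rfl
      linarith
    have hcast : ((N : ℕ) : ℝ) = ((N - 1 : ℕ) : ℝ) + 1 := by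
      have := Nat.succ_pred_eq_of_pos hNpos
      push_cast [Nat.cast_sub hNpos]
      ring
    rw [hcast]
    linarith
end

section
/- Define $g(t) = t^{-2}(2e^{t-1} - 1)$ for $t \geq 1$. Then the function $y \mapsto \log(g(y))$ is convex on the set $\{y \geq 1 : g(y) \geq 1\}$, i.e., $\log g$ is convex where it is nonnegative. -/
open Real Set

/-- Key inequality: `y ^ 2 ≤ 2 * exp (y - 1) - 1` for `y ≥ 1`. -/
lemma key_ineq {y : ℝ} (hy : 1 ≤ y) : y ^ 2 ≤ 2 * Real.exp (y - 1) - 1 := by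
  have h := Real.quadratic_le_exp_of_nonneg (x := y - 1) (by linarith)
  nlinarith [h]

lemma set_eq : {y : ℝ | 1 ≤ y ∧ 1 ≤ (2 * Real.exp (y - 1) - 1) / y ^ 2} = Set.Ici (1 : ℝ) := by
  ext y
  simp only [Set.mem_setOf_eq, Set.mem_Ici]
  constructor
  · exact fun h => h.1
  · intro hy
    refine ⟨hy, ?_⟩
    have hy2 : (0 : ℝ) < y ^ 2 := by positivity
    rw [le_div_iff₀ hy2, one_mul]
    exact key_ineq hy

lemma upos {y : ℝ} (hy : 1 ≤ y) : 0 < 2 * Real.exp (y - 1) - 1 := by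
  have : (1 : ℝ) ≤ Real.exp (y - 1) := Real.one_le_exp (by linarith)
  linarith

theorem stmt_8 :
    ConvexOn ℝ {y : ℝ | 1 ≤ y ∧ 1 ≤ (2 * Real.exp (y - 1) - 1) / y ^ 2}
      (fun y => Real.log ((2 * Real.exp (y - 1) - 1) / y ^ 2)) := by
  rw [set_eq]
  have hint : interior (Set.Ici (1 : ℝ)) = Set.Ioi 1 := interior_Ici
  -- convexity of f0 = log (2 exp (y-1) - 1) - 2 * log y on Ici 1
  have hconv : ConvexOn ℝ (Set.Ici (1 : ℝ))
      (fun y => Real.log (2 * Real.exp (y - 1) - 1) - 2 * Real.log y) := by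
    apply convexOn_of_hasDerivWithinAt2_nonneg (convex_Ici 1)
      (f' := fun y => 2 * Real.exp (y - 1) / (2 * Real.exp (y - 1) - 1) - 2 / y)
      (f'' := fun y => 2 / y ^ 2 - 2 * Real.exp (y - 1) / (2 * Real.exp (y - 1) - 1) ^ 2)
    · -- continuity
      apply ContinuousOn.sub
      · apply ContinuousOn.log
        · fun_prop
        · intro y hy
          exact (upos hy).ne'
      · apply ContinuousOn.mul continuousOn_const
        apply ContinuousOn.log continuousOn_id
        intro y hy
        simp only [Set.mem_Ici] at hy
        exact (by linarith : (0:ℝ) < y).ne'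
    · -- first derivative
      rw [hint]
      intro y hy
      simp only [Set.mem_Ioi] at hy
      have hy0 : y ≠ 0 := by linarith
      have hu : (2 * Real.exp (y - 1) - 1) ≠ 0 := (upos hy.le).ne'
      have h1 : HasDerivAt (fun y : ℝ => 2 * Real.exp (y - 1) - 1)
          (2 * Real.exp (y - 1)) y := by
        have := (((hasDerivAt_id y).sub_const 1).exp.const_mul 2).sub_const 1
        simpa using this
      have h2 : HasDerivAt (fun y : ℝ => Real.log (2 * Real.exp (y - 1) - 1))
          (2 * Real.exp (y - 1) / (2 * Real.exp (y - 1) - 1)) y := h1.log hu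
      have h3 : HasDerivAt (fun y : ℝ => 2 * Real.log y) (2 / y) y := by
        have := (Real.hasDerivAt_log hy0).const_mul 2
        simpa [div_eq_mul_inv] using this
      exact ((h2.sub h3)).hasDerivWithinAt
    · -- second derivative
      rw [hint]
      intro y hy
      simp only [Set.mem_Ioi] at hy
      have hy0 : y ≠ 0 := by linarith
      have hu : (2 * Real.exp (y - 1) - 1) ≠ 0 := (upos hy.le).ne'
      have h1 : HasDerivAt (fun y : ℝ => 2 * Real.exp (y - 1))
          (2 * Real.exp (y - 1)) y := by
        have := ((hasDerivAt_id y).sub_const 1).exp.const_mul 2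
        simpa using this
      have h1' : HasDerivAt (fun y : ℝ => 2 * Real.exp (y - 1) - 1)
          (2 * Real.exp (y - 1)) y := h1.sub_const 1
      have h2 : HasDerivAt (fun y : ℝ => 2 * Real.exp (y - 1) / (2 * Real.exp (y - 1) - 1))
          ((2 * Real.exp (y - 1) * (2 * Real.exp (y - 1) - 1) -
            2 * Real.exp (y - 1) * (2 * Real.exp (y - 1))) /
            (2 * Real.exp (y - 1) - 1) ^ 2) y := h1.div h1' hu
      have h3 : HasDerivAt (fun y : ℝ => 2 / y)
          ((0 * y - 2 * 1) / y ^ 2) y := (hasDerivAt_const y 2).div (hasDerivAt_id y) hy0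
      have h4 := h2.sub h3
      have heq : (2 * Real.exp (y - 1) * (2 * Real.exp (y - 1) - 1) -
            2 * Real.exp (y - 1) * (2 * Real.exp (y - 1))) /
            (2 * Real.exp (y - 1) - 1) ^ 2 - (0 * y - 2 * 1) / y ^ 2
          = 2 / y ^ 2 - 2 * Real.exp (y - 1) / (2 * Real.exp (y - 1) - 1) ^ 2 := by
        field_simp
        ring
      rw [heq] at h4
      exact h4.hasDerivWithinAt
    · -- nonnegativity of second derivative
      rw [hint]
      intro y hy
      simp only [Set.mem_Ioi] at hy
      have he : (1 : ℝ) ≤ Real.exp (y - 1) := Real.one_le_exp (by linarith)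
      have hk : y ^ 2 ≤ 2 * Real.exp (y - 1) - 1 := key_ineq hy.le
      have hy2 : (0 : ℝ) < y ^ 2 := by positivity
      have hu2 : (0 : ℝ) < (2 * Real.exp (y - 1) - 1) ^ 2 := by
        have := upos hy.le; positivity
      rw [sub_nonneg, div_le_div_iff₀ hu2 hy2]
      nlinarith [mul_le_mul_of_nonneg_left hk (by linarith : (0:ℝ) ≤ 2 * Real.exp (y - 1) - 1),
        mul_le_mul_of_nonneg_left he (le_of_lt hy2)]
  refine hconv.congr ?_
  intro y hy
  simp only [Set.mem_Ici] at hy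
  have hu := upos hy
  have hy0 : (0 : ℝ) < y := by linarith
  show Real.log (2 * Real.exp (y - 1) - 1) - 2 * Real.log y
      = Real.log ((2 * Real.exp (y - 1) - 1) / y ^ 2)
  rw [Real.log_div hu.ne' (by positivity), Real.log_pow]
  push_cast
  ring
end

section
/- Let $X$ be a nonnegative random variable with mean $\mu > 0$ and finite variance $\sigma^2$. Then $\sup_{p \geq 0}\; p \cdot \mathbb{P}(X \geq p) \geq \mu \cdot \left(c + \beta \log\left(1 + \frac{\sigma^2}{\mu^2}\right)\right)^{-1}$ for $\beta = 2$ and some absolute constant $c > 0$ independent of the distribution of $X$. -/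
/-!
Let `R` be the monopoly revenue and `G t = P(X > t)`. Then `G ≤ 1`, `t G(t) ≤ R` by definition
of `R`, and `t² G(t) ≤ E[X²]` by Chebyshev. Integrating the best of these three bounds on
`(0, R]`, `(R, E[X²]/R]` and `(E[X²]/R, ∞)` in the layer-cake formula `m = ∫₀^∞ G` gives
`m ≤ R (2 + log (E[X²]/R²))`, i.e. `1 ≤ r (2 + L - 2 log r)` for `r = R/m` and
`L = log (1 + σ²/m²)`. As `r ↦ r (2 + L - 2 log r)` is increasing on `(0, 1)` (convexity of
`r log r`) and is at most `1` at `r = 1/(6 + 2L)`, we get `R ≥ m/(6 + 2L)`.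
-/

open MeasureTheory Set Real

theorem mul_log_sub_le_mul_log {r s : ℝ} (hr : 0 < r) (hs : 0 < s) :
    r * log s + r - s ≤ r * log r := by
  have h := log_le_sub_one_of_pos (div_pos hs hr)
  rw [log_div hs.ne' hr.ne'] at h
  have := mul_le_mul_of_nonneg_left h hr.le
  rw [mul_sub r (s / r), mul_div_cancel₀ _ hr.ne'] at this
  linarith

theorem mul_two_add_sub_two_log_lt {L r s : ℝ} (hL : 0 ≤ L) (hr : 0 < r) (hrs : r < s)
    (hs : s < 1) : r * (2 + L - 2 * log r) < s * (2 + L - 2 * log s) := by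
  have tangent := mul_log_sub_le_mul_log hr (hr.trans hrs)
  have slope : 0 < (s - r) * (L - 2 * log s) :=
    mul_pos (sub_pos.2 hrs) (by linarith [log_neg (hr.trans hrs) hs])
  linarith

theorem inv_mul_two_add_sub_two_log_le_one {L : ℝ} (hL : 0 ≤ L) :
    (6 + 2 * L)⁻¹ * (2 + L - 2 * log (6 + 2 * L)⁻¹) ≤ 1 := by
  have hlog : log (6 + 2 * L) ≤ 2 + L / 2 := by
    have h4 : log ((6 + 2 * L) / 4) ≤ (6 + 2 * L) / 4 - 1 :=
      log_le_sub_one_of_pos (by positivity)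
    have h2 : log 4 = 2 * log 2 := by
      rw [show (4 : ℝ) = 2 ^ 2 by norm_num, log_pow]; norm_num
    rw [log_div (by positivity) (by norm_num), h2] at h4
    linarith [log_two_lt_d9]
  rw [log_inv, inv_mul_le_one₀ (by positivity)]
  linarith

theorem inv_le_of_one_le_mul_two_add_sub_two_log {L r : ℝ} (hL : 0 ≤ L) (hr : 0 < r)
    (h : 1 ≤ r * (2 + L - 2 * log r)) : (6 + 2 * L)⁻¹ ≤ r := by
  by_contra! hlt
  have hlt1 : (6 + 2 * L)⁻¹ < 1 := inv_lt_one_of_one_lt₀ (by linarith)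
  linarith [mul_two_add_sub_two_log_lt hL hr hlt hlt1, inv_mul_two_add_sub_two_log_le_one hL]

theorem integrableOn_and_setIntegral_le_of_le {α : Type*} [MeasurableSpace α]
    {μ : Measure α} {f g : α → ℝ} {s : Set α} (hs : MeasurableSet s)
    (hf : AEStronglyMeasurable f (μ.restrict s)) (hf0 : ∀ x ∈ s, 0 ≤ f x)
    (hfg : ∀ x ∈ s, f x ≤ g x) (hg : IntegrableOn g s μ) :
    IntegrableOn f s μ ∧ ∫ x in s, f x ∂μ ≤ ∫ x in s, g x ∂μ := by
  have hfi : IntegrableOn f s μ := hg.mono' hf <| (ae_restrict_iff' hs).2 <|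
    ae_of_all _ fun x hx => by rw [norm_of_nonneg (hf0 x hx)]; exact hfg x hx
  exact ⟨hfi, setIntegral_mono_on hfi hg hs hfg⟩

section TailIntegral

variable {G : ℝ → ℝ}

theorem integrableOn_Ioc_and_setIntegral_le_sub {a b : ℝ} (hG : Measurable G)
    (hG0 : ∀ t, 0 ≤ G t) (hG1 : ∀ t, G t ≤ 1) (hab : a ≤ b) :
    IntegrableOn G (Ioc a b) ∧ ∫ t in Ioc a b, G t ≤ b - a := by
  have hint : ∫ _ in Ioc a b, (1 : ℝ) = b - a := by simp [hab]
  rw [← hint]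
  exact integrableOn_and_setIntegral_le_of_le measurableSet_Ioc hG.aestronglyMeasurable
    (fun t _ => hG0 t) (fun t _ => hG1 t) (integrableOn_const measure_Ioc_lt_top.ne)

theorem integrableOn_Ioc_and_setIntegral_le_mul_log {R a b : ℝ} (hG : Measurable G)
    (hG0 : ∀ t, 0 ≤ G t) (hGR : ∀ t, 0 < t → t * G t ≤ R) (ha : 0 < a) (hab : a ≤ b) :
    IntegrableOn G (Ioc a b) ∧ ∫ t in Ioc a b, G t ≤ R * log (b / a) := by
  have h0 : (0 : ℝ) ∉ uIcc a b := by rw [uIcc_of_le hab]; exact fun h => ha.not_ge h.1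
  have hint : ∫ t in Ioc a b, R * t⁻¹ = R * log (b / a) := by
    rw [← intervalIntegral.integral_of_le hab, intervalIntegral.integral_const_mul,
      integral_inv h0]
  rw [← hint]
  refine integrableOn_and_setIntegral_le_of_le measurableSet_Ioc hG.aestronglyMeasurable
    (fun t _ => hG0 t) (fun t ht => ?_) ((intervalIntegral.intervalIntegrable_inv
      (fun t ht => ne_of_mem_of_not_mem ht h0) continuousOn_id).const_mul R).1
  have ht0 := ha.trans ht.1
  rw [← div_eq_mul_inv, le_div_iff₀ ht0, mul_comm]
  exact hGR t ht0

theorem integrableOn_Ioi_and_setIntegral_le_div {S T : ℝ} (hG : Measurable G)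
    (hG0 : ∀ t, 0 ≤ G t) (hGS : ∀ t, 0 < t → t ^ 2 * G t ≤ S) (hT : 0 < T) :
    IntegrableOn G (Ioi T) ∧ ∫ t in Ioi T, G t ≤ S / T := by
  have hint : ∫ t in Ioi T, S * t ^ (-2 : ℝ) = S / T := by
    rw [integral_const_mul, integral_Ioi_rpow_of_lt (by norm_num) hT]
    norm_num [rpow_neg_one, div_eq_mul_inv]
  rw [← hint]
  refine integrableOn_and_setIntegral_le_of_le measurableSet_Ioi hG.aestronglyMeasurable
    (fun t _ => hG0 t) (fun t ht => ?_)
    ((integrableOn_Ioi_rpow_of_lt (by norm_num) hT).const_mul S)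
  have ht0 : 0 < t := hT.trans ht
  rw [rpow_neg ht0.le, rpow_two, ← div_eq_mul_inv, le_div_iff₀ (by positivity), mul_comm]
  exact hGS t ht0

theorem setIntegral_Ioi_le_of_tail_bounds {R S : ℝ} (hG : Antitone G)
    (hG0 : ∀ t, 0 ≤ G t) (hG1 : ∀ t, G t ≤ 1) (hGR : ∀ t, 0 < t → t * G t ≤ R)
    (hGS : ∀ t, 0 < t → t ^ 2 * G t ≤ S) (hR : 0 ≤ R) (hRS : R ^ 2 ≤ S) :
    ∫ t in Ioi 0, G t ≤ R * (2 + log (S / R ^ 2)) := by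
  rcases hR.eq_or_lt with rfl | hR
  · rw [zero_mul]
    exact setIntegral_nonpos measurableSet_Ioi fun t ht =>
      nonpos_of_mul_nonpos_right (hGR t ht) ht
  set T := S / R
  have hS : 0 < S := (pow_pos hR 2).trans_le hRS
  have hT : 0 < T := div_pos hS hR
  have hRT : R ≤ T := by rw [le_div_iff₀ hR]; nlinarith
  obtain ⟨hi₁, hb₁⟩ := integrableOn_Ioc_and_setIntegral_le_sub hG.measurable hG0 hG1 hR.le
  obtain ⟨hi₂, hb₂⟩ :=
    integrableOn_Ioc_and_setIntegral_le_mul_log hG.measurable hG0 hGR hR hRT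
  obtain ⟨hi₃, hb₃⟩ := integrableOn_Ioi_and_setIntegral_le_div hG.measurable hG0 hGS hT
  have hsplit : ∫ t in Ioi 0, G t =
      (∫ t in Ioc 0 R, G t) + (∫ t in Ioc R T, G t) + ∫ t in Ioi T, G t := by
    have hi₁₂ : IntegrableOn G (Ioc 0 T) := Ioc_union_Ioc_eq_Ioc hR.le hRT ▸ hi₁.union hi₂
    rw [← Ioc_union_Ioi_eq_Ioi hT.le,
      setIntegral_union Ioc_disjoint_Ioi_same measurableSet_Ioi hi₁₂ hi₃,
      ← Ioc_union_Ioc_eq_Ioc hR.le hRT,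
      setIntegral_union (Ioc_disjoint_Ioc_of_le le_rfl) measurableSet_Ioc hi₁ hi₂]
  have hST : S / T = R := div_div_cancel₀ hS.ne'
  have hlog : S / R ^ 2 = T / R := by rw [div_div, sq]
  rw [hsplit, hlog]
  linarith

end TailIntegral

theorem integrable_sq_and_integral_sq_eq {μ : Measure ℝ} [IsProbabilityMeasure μ] {m : ℝ}
    (hX : Integrable (fun x => x) μ) (hm : ∫ x, x ∂μ = m)
    (hV : Integrable (fun x => (x - m) ^ 2) μ) :
    Integrable (fun x => x ^ 2) μ ∧ ∫ x, x ^ 2 ∂μ = ∫ x, (x - m) ^ 2 ∂μ + m ^ 2 := by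
  have hsq : (fun x : ℝ => x ^ 2) = fun x => (x - m) ^ 2 + (2 * m * x - m ^ 2) := by
    funext x; ring
  have hlin : Integrable (fun x => 2 * m * x - m ^ 2) μ :=
    (hX.const_mul _).sub (integrable_const _)
  refine ⟨hsq ▸ hV.add hlin, ?_⟩
  rw [hsq, integral_add hV hlin, integral_sub (hX.const_mul _) (integrable_const _),
    integral_const_mul, hm, integral_const, probReal_univ, one_smul]
  ring

noncomputable def monopolyRevenue (μ : Measure ℝ) : ℝ :=
  ⨆ p : Ici (0 : ℝ), (p : ℝ) * μ.real (Ici (p : ℝ))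

section MonopolyRevenue

variable {μ : Measure ℝ}

theorem mul_measureReal_Ici_le_integral (hμ : ∀ᵐ x ∂μ, 0 ≤ x)
    (hX : Integrable (fun x => x) μ) (p : ℝ) : p * μ.real (Ici p) ≤ ∫ x, x ∂μ :=
  mul_meas_ge_le_integral_of_nonneg hμ hX p

theorem monopolyRevenue_le_integral (hμ : ∀ᵐ x ∂μ, 0 ≤ x)
    (hX : Integrable (fun x => x) μ) :
    monopolyRevenue μ ≤ ∫ x, x ∂μ :=
  ciSup_le fun p => mul_measureReal_Ici_le_integral hμ hX p

theorem mul_measureReal_Ici_le_monopolyRevenue (hμ : ∀ᵐ x ∂μ, 0 ≤ x)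
    (hX : Integrable (fun x => x) μ) {p : ℝ} (hp : 0 ≤ p) :
    p * μ.real (Ici p) ≤ monopolyRevenue μ :=
  le_ciSup (f := fun p : Ici (0 : ℝ) => (p : ℝ) * μ.real (Ici (p : ℝ)))
    ⟨_, forall_mem_range.2 fun p => mul_measureReal_Ici_le_integral hμ hX p⟩ ⟨p, hp⟩

theorem monopolyRevenue_nonneg (hμ : ∀ᵐ x ∂μ, 0 ≤ x) (hX : Integrable (fun x => x) μ) :
    0 ≤ monopolyRevenue μ := by
  simpa using mul_measureReal_Ici_le_monopolyRevenue hμ hX le_rfl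

variable [IsProbabilityMeasure μ]

theorem mean_le_monopolyRevenue_mul (hμ : ∀ᵐ x ∂μ, 0 ≤ x) {m σ2 : ℝ}
    (hX : Integrable (fun x => x) μ) (hm : ∫ x, x ∂μ = m)
    (hV : Integrable (fun x => (x - m) ^ 2) μ) (hσ2 : ∫ x, (x - m) ^ 2 ∂μ = σ2) :
    m ≤ monopolyRevenue μ * (2 + log ((σ2 + m ^ 2) / monopolyRevenue μ ^ 2)) := by
  obtain ⟨hX2, hsq⟩ := integrable_sq_and_integral_sq_eq hX hm hV
  have hR := monopolyRevenue_nonneg hμ hX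
  have hRm : monopolyRevenue μ ≤ m := hm ▸ monopolyRevenue_le_integral hμ hX
  have hRS : monopolyRevenue μ ^ 2 ≤ ∫ x, x ^ 2 ∂μ := by
    have hσ : 0 ≤ σ2 := hσ2 ▸ integral_nonneg fun x => sq_nonneg _
    rw [hsq, hσ2]
    nlinarith
  rw [← hσ2, ← hsq, ← hm, hX.integral_eq_integral_meas_lt hμ]
  refine setIntegral_Ioi_le_of_tail_bounds (fun s t hst => ?_) (fun _ => measureReal_nonneg)
    (fun _ => measureReal_le_one) (fun t ht => ?_) (fun t ht => ?_) hR hRS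
  · exact measureReal_mono fun x hx => lt_of_le_of_lt hst hx
  · calc t * μ.real {x | t < x} ≤ t * μ.real (Ici t) :=
          mul_le_mul_of_nonneg_left
            (measureReal_mono fun x (hx : t < x) => mem_Ici.2 hx.le) ht.le
      _ ≤ monopolyRevenue μ := mul_measureReal_Ici_le_monopolyRevenue hμ hX ht.le
  · calc t ^ 2 * μ.real {x | t < x} ≤ t ^ 2 * μ.real {x | t ^ 2 ≤ x ^ 2} :=
          mul_le_mul_of_nonneg_left (measureReal_mono fun x (hx : t < x) => by
            exact pow_le_pow_left₀ ht.le hx.le 2) (sq_nonneg t)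
      _ ≤ ∫ x, x ^ 2 ∂μ :=
        mul_meas_ge_le_integral_of_nonneg (ae_of_all _ fun x => sq_nonneg x) hX2 _

end MonopolyRevenue

theorem stmt_10 :
    ∃ c : ℝ, 0 < c ∧
      ∀ (μ : Measure ℝ), IsProbabilityMeasure μ → μ (Set.Iio (0:ℝ)) = 0 →
        ∀ m σ2 : ℝ, 0 < m →
          Integrable (fun x : ℝ => x) μ → (∫ x, x ∂μ) = m →
          Integrable (fun x : ℝ => (x - m) ^ 2) μ → (∫ x, (x - m) ^ 2 ∂μ) = σ2 →
          m * (c + 2 * Real.log (1 + σ2 / m ^ 2))⁻¹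
            ≤ ⨆ p : Set.Ici (0:ℝ), (p : ℝ) * (μ (Set.Ici (p : ℝ))).toReal := by
  refine ⟨6, by norm_num, fun μ _ hneg m σ2 hm hX hmean hV hσ2 => ?_⟩
  have hμ : ∀ᵐ x ∂μ, 0 ≤ x := ae_iff.2 <| measure_mono_null (fun x hx => not_le.1 hx) hneg
  have key := mean_le_monopolyRevenue_mul hμ hX hmean hV hσ2
  have hR : 0 < monopolyRevenue μ := by
    refine (monopolyRevenue_nonneg hμ hX).lt_of_ne' fun h => ?_
    rw [h, zero_mul] at key
    exact key.not_gt hm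
  set R := monopolyRevenue μ
  have hσ : 0 ≤ σ2 := hσ2 ▸ integral_nonneg fun x => sq_nonneg _
  set L := log (1 + σ2 / m ^ 2)
  have hlog : log ((σ2 + m ^ 2) / R ^ 2) = L - 2 * log (R / m) := by
    rw [show (σ2 + m ^ 2) / R ^ 2 = (1 + σ2 / m ^ 2) / (R / m) ^ 2 by field_simp; ring,
      log_div (by positivity) (by positivity), log_pow]
    push_cast; ring
  have hr : 1 ≤ R / m * (2 + L - 2 * log (R / m)) := by
    rw [hlog, ← add_sub_assoc] at key
    rw [div_mul_eq_mul_div, le_div_iff₀ hm]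
    linarith
  have hL : 0 ≤ L := log_nonneg (le_add_of_nonneg_right (by positivity))
  have := inv_le_of_one_le_mul_two_add_sub_two_log hL (div_pos hR hm) hr
  calc m * (6 + 2 * L)⁻¹ ≤ m * (R / m) := by gcongr
    _ = R := mul_div_cancel₀ R hm.ne'
end
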